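/- arXiv:1201.0365 — 8 statements merged into one kernel-verified Lean document; each statement's English description precedes it below -/
import Mathlib

section
/- For all permutations π and σ of {1,2,…,n} (each extended to {0,1,…,n} by fixing 0), the image of the composition satisfies: overline(π∘σ) = overline(π) ∘ (π ∘ overline(σ) ∘ π⁻¹), i.e. the image of π∘σ under the map f equals overline(π) composed with the conjugate of overline(σ) by π. -/
/-- The (n+1)-cycle (0,1,2,…,n) on {0,1,…,n} = `Fin (n+1)`, mapping x to x+1 (mod n+1). -/
def rho (n : ℕ) : Equiv.Perm (Fin (n + 1)) :=
  finRotate (n + 1)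

/-- For a permutation `π` of {0,1,…,n} fixing 0 (the extension of a permutation of {1,…,n}),
`ob n π` is `overline(π) = ρ ∘ β_π`, where `β_π = π ∘ ρ⁻¹ ∘ π⁻¹` is precisely the
(n+1)-cycle (0, π_n, π_{n−1}, …, π_1): it sends 0 ↦ π_n, π_i ↦ π_{i−1} (2 ≤ i ≤ n),
and π_1 ↦ 0. -/
def ob (n : ℕ) (π : Equiv.Perm (Fin (n + 1))) : Equiv.Perm (Fin (n + 1)) :=
  rho n * (π * (rho n)⁻¹ * π⁻¹)

theorem overline_mul_general (n : ℕ) (π σ : Equiv.Perm (Fin (n + 1))) :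
    ob n (π * σ) = ob n π * (π * ob n σ * π⁻¹) := by
  unfold ob
  group

/-- for permutations π and σ of {1,…,n} (extended to {0,…,n} by fixing 0),
`overline(π∘σ) = overline(π) ∘ (π ∘ overline(σ) ∘ π⁻¹)`. -/
theorem overline_mul (n : ℕ) (π σ : Equiv.Perm (Fin (n + 1)))
    (hπ : π 0 = 0) (hσ : σ 0 = 0) :
    ob n (π * σ) = ob n π * (π * ob n σ * π⁻¹) :=
  overline_mul_general n π σ
end

section
/- Let S be a set of permutations of {1,2,…,n} and let π be a permutation of {1,2,…,n} that factors as π = g_t ∘ g_{t−1} ∘ ⋯ ∘ g_1 with every g_i ∈ S. Then there exist permutations h_1, h_2, …, h_t of {0,1,…,n}, each of which is conjugate (in the symmetric group on {0,1,…,n}) to overline(g) for some g ∈ S, such that overline(π) = h_t ∘ h_{t−1} ∘ ⋯ ∘ h_1. -/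
/-!
`overline(π) = ρ π ρ⁻¹ π⁻¹` is the commutator `⁅ρ, π⁆`, and commutators satisfy the cocycle
identity `⁅ρ, g τ⁆ = ⁅ρ, g⁆ · g ⁅ρ, τ⁆ g⁻¹`. Peeling the factors off `π = g_t ⋯ g_1` one at a time
writes `⁅ρ, π⁆` as a product of `t` conjugates of the `⁅ρ, g_i⁆`.
-/

open scoped commutatorElement

theorem exists_isConj_commutatorElement_factorisation {G : Type*} [Group G] (a : G)
    (L : List G) :
    ∃ M : List G, M.length = L.length ∧ (∀ h ∈ M, ∃ g ∈ L, IsConj ⁅a, g⁆ h) ∧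
      M.prod = ⁅a, L.prod⁆ := by
  induction L with
  | nil => exact ⟨[], rfl, by simp, by simp⟩
  | cons g L ih =>
    obtain ⟨M, hlen, hconj, hprod⟩ := ih
    refine ⟨⁅a, g⁆ :: M.map (MulAut.conj g), by simp [hlen], ?_, ?_⟩
    · rintro h (_ | ⟨_, hh⟩)
      · exact ⟨g, List.mem_cons_self, IsConj.refl _⟩
      · obtain ⟨h', hh', rfl⟩ := List.mem_map.mp hh
        obtain ⟨g', hg', hc⟩ := hconj h' hh'
        exact ⟨g', List.mem_cons_of_mem _ hg', hc.trans (isConj_iff.mpr ⟨g, rfl⟩)⟩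
    · rw [List.prod_cons, List.prod_cons, ← map_list_prod, hprod, MulAut.conj_apply,
        commutatorElement_mul_right_eq_mul_conj]
      group

theorem ob_eq_commutatorElement (n : ℕ) (π : Equiv.Perm (Fin (n + 1))) :
    ob n π = ⁅rho n, π⁆ := by
  rw [ob, commutatorElement_def]
  group

theorem overline_factorisation_general (n : ℕ) (S : Set (Equiv.Perm (Fin (n + 1))))
    (π : Equiv.Perm (Fin (n + 1)))
    (L : List (Equiv.Perm (Fin (n + 1)))) (hL : ∀ g ∈ L, g ∈ S) (hLπ : L.prod = π) :
    ∃ M : List (Equiv.Perm (Fin (n + 1))),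
      M.length = L.length ∧
      (∀ h ∈ M, ∃ g ∈ S, IsConj (ob n g) h) ∧
      M.prod = ob n π := by
  obtain ⟨M, hlen, hconj, hprod⟩ := exists_isConj_commutatorElement_factorisation (rho n) L
  refine ⟨M, hlen, fun h hh => ?_, by rw [hprod, hLπ, ob_eq_commutatorElement]⟩
  obtain ⟨g, hg, hc⟩ := hconj h hh
  exact ⟨g, hL g hg, ob_eq_commutatorElement n g ▸ hc⟩

/-- if π (a permutation of {1,…,n}, extended by fixing 0) factors as a
product of t elements of S (each a permutation of {1,…,n} extended by fixing 0),
then overline(π) factors as a product of t permutations of {0,1,…,n}, each conjugate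
(in the symmetric group on {0,1,…,n}) to overline(g) for some g ∈ S. -/
theorem overline_factorisation (n : ℕ) (S : Set (Equiv.Perm (Fin (n + 1))))
    (hS : ∀ g ∈ S, g 0 = 0)
    (π : Equiv.Perm (Fin (n + 1))) (hπ : π 0 = 0)
    (L : List (Equiv.Perm (Fin (n + 1)))) (hL : ∀ g ∈ L, g ∈ S) (hLπ : L.prod = π) :
    ∃ M : List (Equiv.Perm (Fin (n + 1))),
      M.length = L.length ∧
      (∀ h ∈ M, ∃ g ∈ S, IsConj (ob n g) h) ∧
      M.prod = ob n π :=
  overline_factorisation_general n S π L hL hLπ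
end

section
/- For any block-interchange β(i,j,k,l) of {1,2,…,n} with 1 ≤ i < j ≤ k < l ≤ n+1, its image under the map f is the product of two transpositions: overline(β(i,j,k,l)) = (j,l) ∘ (i,k), where (j,l) and (i,k) denote the permutations of {0,1,…,n} exchanging j with l and i with k respectively (note these two transpositions need not be disjoint, since j = k is allowed). -/
/-- `IsBlockInterchange n i j k l β` says that `β` (a permutation of {0,1,…,n} fixing 0,
representing a permutation of {1,…,n}) is the block-interchange β(i,j,k,l) with
1 ≤ i < j ≤ k < l ≤ n+1, i.e. its one-line notation on positions 1,…,n is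
⟨1,…,i−1, k,…,l−1, j,…,k−1, i,…,j−1, l,…,n⟩. -/
def IsBlockInterchange (n i j k l : ℕ) (β : Equiv.Perm (Fin (n + 1))) : Prop :=
  1 ≤ i ∧ i < j ∧ j ≤ k ∧ k < l ∧ l ≤ n + 1 ∧
  (∀ p : Fin (n + 1), (p : ℕ) < i → β p = p) ∧
  (∀ p : Fin (n + 1), i ≤ (p : ℕ) → (p : ℕ) < i + (l - k) →
      (β p : ℕ) = k + ((p : ℕ) - i)) ∧
  (∀ p : Fin (n + 1), i + (l - k) ≤ (p : ℕ) → (p : ℕ) < i + (l - k) + (k - j) →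
      (β p : ℕ) = j + ((p : ℕ) - (i + (l - k)))) ∧
  (∀ p : Fin (n + 1), i + (l - k) + (k - j) ≤ (p : ℕ) → (p : ℕ) < l →
      (β p : ℕ) = i + ((p : ℕ) - (i + (l - k) + (k - j)))) ∧
  (∀ p : Fin (n + 1), l ≤ (p : ℕ) → β p = p)

open Fin.NatCast

/-!
`ob π` sends `π (x + 1)` to `π x + 1`. For `β` with one-line notation
`⟨…, i-1 | k … l-1 | j … k-1 | i … j-1 | l, …⟩` this fixes every value except the first entry
of each block, which goes to one more than the last entry of the block before it:
`k ↦ i`, `j ↦ l`, `i ↦ k` (`i ↦ l` if `j = k`) and `l ↦ j`, which is exactly `(j l) (i k)`.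
The comparison is done in `ℕ`, where the point `0` of `Fin (n + 1)` is represented by `n + 1`,
so that the wrap-around `n ↦ 0` and the case `l = n + 1` need no separate treatment.
-/

open Equiv

theorem Set.InjOn.map_swap {α β : Type*} [DecidableEq α] [DecidableEq β] {f : α → β}
    {s : Set α} (hf : s.InjOn f) {a b v : α} (ha : a ∈ s) (hb : b ∈ s) (hv : v ∈ s) :
    f (swap a b v) = swap (f a) (f b) (f v) := by
  simp only [swap_apply_def, hf.eq_iff hv ha, hf.eq_iff hv hb]
  split_ifs <;> rfl

theorem Fin.natCast_injOn_Icc (n : ℕ) :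
    (Set.Icc 1 (n + 1)).InjOn (Nat.cast : ℕ → Fin (n + 1)) := by
  rintro _ ⟨ha₁, ha₂⟩ _ ⟨hb₁, hb₂⟩ hab
  obtain ⟨a, rfl⟩ := Nat.exists_eq_add_of_le' ha₁
  obtain ⟨b, rfl⟩ := Nat.exists_eq_add_of_le' hb₁
  push_cast at hab
  have hval := congrArg Fin.val (add_right_cancel hab)
  rwa [Fin.val_cast_of_lt (by omega), Fin.val_cast_of_lt (by omega), ← add_left_inj 1] at hval

lemma ob_apply_apply_add_one {n : ℕ} (π : Perm (Fin (n + 1))) (x : Fin (n + 1)) :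
    ob n π (π (x + 1)) = π x + 1 := by
  have hρ : ∀ y, rho n y = y + 1 := finRotate_apply
  have hρ_symm : (rho n).symm (x + 1) = x := (rho n).symm_apply_eq.mpr (hρ x).symm
  simp only [ob, Perm.mul_apply, Perm.coe_inv, symm_apply_apply, hρ_symm, hρ]

lemma ob_eq_iff {n : ℕ} (π σ : Perm (Fin (n + 1))) :
    ob n π = σ ↔ ∀ x, σ (π (x + 1)) = π x + 1 := by
  refine ⟨fun h x => h ▸ ob_apply_apply_add_one π x, fun h => Equiv.ext fun y => ?_⟩
  obtain ⟨x, rfl⟩ : ∃ x, π (x + 1) = y := ⟨π⁻¹ y - 1, by simp⟩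
  rw [ob_apply_apply_add_one, h]

def blockInterchangeFun (i j k l p : ℕ) : ℕ :=
  if p < i then p
  else if p < i + (l - k) then k + (p - i)
  else if p < i + (l - k) + (k - j) then j + (p - (i + (l - k)))
  else if p < l then i + (p - (i + (l - k) + (k - j)))
  else p

lemma blockInterchangeFun_mem_Icc {i j k l N p : ℕ} (hi : 1 ≤ i) (hij : i ≤ j) (hjk : j ≤ k)
    (hkl : k ≤ l) (hl : l ≤ N) (hp : p ∈ Set.Icc 1 N) :
    blockInterchangeFun i j k l p ∈ Set.Icc 1 N := by
  obtain ⟨hp₁, hp₂⟩ := hp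
  unfold blockInterchangeFun
  split_ifs <;> constructor <;> omega

lemma swap_swap_blockInterchangeFun_add_one {i j k l : ℕ} (hij : i < j) (hjk : j ≤ k)
    (hkl : k < l) (p : ℕ) :
    swap j l (swap i k (blockInterchangeFun i j k l (p + 1))) =
      blockInterchangeFun i j k l p + 1 := by
  unfold blockInterchangeFun
  split_ifs <;> simp (disch := omega) only [swap_apply_def, if_pos, if_neg] <;> omega

namespace IsBlockInterchange

variable {n i j k l : ℕ} {β : Perm (Fin (n + 1))}

lemma val_apply (h : IsBlockInterchange n i j k l β) (p : Fin (n + 1)) :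
    (β p : ℕ) = blockInterchangeFun i j k l p := by
  obtain ⟨-, -, -, -, -, hA, hB, hC, hD, hE⟩ := h
  unfold blockInterchangeFun
  split_ifs with h₁ h₂ h₃ h₄
  · rw [hA p h₁]
  · exact hB p (not_lt.mp h₁) h₂
  · exact hC p (not_lt.mp h₂) h₃
  · exact hD p (not_lt.mp h₃) h₄
  · rw [hE p (not_lt.mp h₄)]

lemma apply_natCast (h : IsBlockInterchange n i j k l β) {p : ℕ} (hp : p ≤ n + 1) :
    β p = (blockInterchangeFun i j k l p : Fin (n + 1)) := by
  obtain ⟨hi, hij, hjk, hkl, hln, hA, -⟩ := id h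
  rcases hp.lt_or_eq with hp | rfl
  · rw [← Fin.cast_val_eq_self (β p), h.val_apply, Fin.val_cast_of_lt hp]
  · have hfix : blockInterchangeFun i j k l (n + 1) = n + 1 := by
      unfold blockInterchangeFun; split_ifs <;> omega
    rw [hfix, Fin.natCast_self]
    exact hA 0 hi

lemma swap_mul_swap_apply_add_one (h : IsBlockInterchange n i j k l β) (x : Fin (n + 1)) :
    (swap (j : Fin (n + 1)) l * swap (i : Fin (n + 1)) k) (β (x + 1)) = β x + 1 := by
  obtain ⟨hi, hij, hjk, hkl, hln, -⟩ := id h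
  have hinj := Fin.natCast_injOn_Icc n
  have hi' : i ∈ Set.Icc 1 (n + 1) := ⟨hi, by omega⟩
  have hj' : j ∈ Set.Icc 1 (n + 1) := ⟨by omega, by omega⟩
  have hk' : k ∈ Set.Icc 1 (n + 1) := ⟨by omega, by omega⟩
  have hl' : l ∈ Set.Icc 1 (n + 1) := ⟨by omega, hln⟩
  have hx : x + 1 = ((x + 1 : ℕ) : Fin (n + 1)) := by simp
  have hf := blockInterchangeFun_mem_Icc hi hij.le hjk hkl.le hln (p := x + 1)
    ⟨by omega, by omega⟩
  calc (swap (j : Fin (n + 1)) l * swap (i : Fin (n + 1)) k) (β (x + 1))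
      = ((swap j l (swap i k (blockInterchangeFun i j k l (x + 1))) : ℕ) : Fin (n + 1)) := by
        rw [hx, h.apply_natCast x.is_lt, Perm.mul_apply,
          hinj.map_swap hj' hl' ((bijOn_swap hi' hk').mapsTo hf), hinj.map_swap hi' hk' hf]
    _ = β x + 1 := by
        rw [swap_swap_blockInterchangeFun_add_one hij hjk hkl, Nat.cast_succ,
          ← h.apply_natCast x.is_lt.le, Fin.cast_val_eq_self]

end IsBlockInterchange

/-- the image of the block-interchange β(i,j,k,l) under the map f is the
product of the two transpositions (j,l) and (i,k) of {0,1,…,n}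
(the numbers i,j,k,l being taken mod n+1, which only affects l = n+1, identified with 0). -/
theorem overline_blockInterchange (n i j k l : ℕ) (β : Equiv.Perm (Fin (n + 1)))
    (h : IsBlockInterchange n i j k l β) :
    ob n β = Equiv.swap (j : Fin (n + 1)) (l : Fin (n + 1)) *
      Equiv.swap (i : Fin (n + 1)) (k : Fin (n + 1)) :=
  (ob_eq_iff _ _).mpr h.swap_mul_swap_apply_add_one
end

section
/- For every permutation π of {1,2,…,n}, the block-interchange distance of π satisfies bid(π) ≥ (n + 1 − c(overline(π))) / 2, where c(overline(π)) is the number of cycles (including fixed points) of the permutation overline(π) of {0,1,…,n}. -/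
/-- The number of fixed points c₁(σ) of a permutation σ. -/
def fixedPointCount {m : ℕ} (σ : Equiv.Perm (Fin m)) : ℕ :=
  (Finset.univ.filter fun x => σ x = x).card

/-- The number of cycles c(σ) of a permutation σ, counting fixed points as 1-cycles
(`Equiv.Perm.cycleType` lists the lengths of the cycles of length ≥ 2). -/
def cycleCount {m : ℕ} (σ : Equiv.Perm (Fin m)) : ℕ :=
  σ.cycleType.card + fixedPointCount σ

/-- The number of odd-length cycles c_odd(σ) of a permutation σ, counting fixed points
as (odd) 1-cycles. -/
def oddCycleCount {m : ℕ} (σ : Equiv.Perm (Fin m)) : ℕ :=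
  (σ.cycleType.filter fun k => Odd k).card + fixedPointCount σ

/-- `β` is a block-interchange β(i,j,k,l) for some 1 ≤ i < j ≤ k < l ≤ n+1. -/
def IsBlockInterchangePerm (n : ℕ) (β : Equiv.Perm (Fin (n + 1))) : Prop :=
  ∃ i j k l : ℕ, IsBlockInterchange n i j k l β

/-- The block-interchange distance: the least t such that π is a product of t
block-interchanges. -/
noncomputable def bid (n : ℕ) (π : Equiv.Perm (Fin (n + 1))) : ℕ :=
  sInf {t | ∃ L : List (Equiv.Perm (Fin (n + 1))), L.length = t ∧
    (∀ g ∈ L, IsBlockInterchangePerm n g) ∧ L.prod = π}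

/-! The number of cycles of a permutation `σ` of `Fin m` is the dimension of the space of
`σ`-invariant vectors `V_σ ⊆ ℚ^m`. A vector invariant under both `σ` and `τ` is invariant
under `σ * τ`, so the dimension formula for `V_σ ⊔ V_τ` and `V_σ ⊓ V_τ` gives
`c σ + c τ ≤ m + c (σ * τ)`; with `c (swap a b) ≥ m - 1`, multiplying by a transposition
lowers `c` by at most one.

A direct computation shows that `overline(β(i,j,k,l)) = (j l)(i k)`, and
`overline(π * β) = overline(π) * π overline(β) π⁻¹`. Hence each block-interchange of a
factorisation of `π` lowers `c ∘ overline` by at most two, starting from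
`c (overline 1) = n + 1`. -/

open Equiv Equiv.Perm Finset
open Module (finrank)
open Fin.NatCast

namespace Equiv.Perm

variable {α : Type*}

section FixedVectors

variable (K : Type*) [Field K]

def fixedVectors (σ : Perm α) : Submodule K (α → K) where
  carrier := {v | ∀ x, v (σ x) = v x}
  add_mem' hu hv x := by simp only [Pi.add_apply, hu x, hv x]
  zero_mem' _ := rfl
  smul_mem' c v hv x := by simp only [Pi.smul_apply, hv x]

variable {K}

theorem SameCycle.apply_eq_of_mem_fixedVectors [Finite α] {σ : Perm α} {v : α → K}
    (hv : v ∈ fixedVectors K σ) {x y : α} (h : σ.SameCycle x y) : v x = v y := by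
  obtain ⟨i, -, rfl⟩ := h.exists_pow_eq'
  clear h
  induction i with
  | zero => rfl
  | succ i ih => rw [pow_succ', mul_apply, hv, ih]

def fixedVectorsEquiv [Finite α] (σ : Perm α) :
    fixedVectors K σ ≃ₗ[K] (Quotient (SameCycle.setoid σ) → K) where
  toFun v := Quotient.lift v fun _ _ h => h.apply_eq_of_mem_fixedVectors v.2
  map_add' _ _ := funext fun q => Quotient.inductionOn q fun _ => rfl
  map_smul' _ _ := funext fun q => Quotient.inductionOn q fun _ => rfl
  invFun f :=
    ⟨fun x => f ⟦x⟧, fun _ => congrArg f (Quotient.sound (sameCycle_apply_left.2 .rfl))⟩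
  left_inv _ := rfl
  right_inv _ := funext fun q => Quotient.inductionOn q fun _ => rfl

theorem finrank_fixedVectors [Finite α] (σ : Perm α) :
    finrank K (fixedVectors K σ) = Nat.card (Quotient (SameCycle.setoid σ)) := by
  have := Fintype.ofFinite α
  classical
  rw [(fixedVectorsEquiv σ).finrank_eq, Module.finrank_fintype_fun_eq_card,
    Nat.card_eq_fintype_card]

end FixedVectors

/-- A class of `SameCycle` is either a fixed point or the support of a cycle factor. -/
theorem nat_card_quotient_sameCycle [Fintype α] [DecidableEq α] (σ : Perm α) :
    Nat.card (Quotient (SameCycle.setoid σ)) = σ.cycleType.card + #{x | σ x = x} := by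
  classical
  let F : Quotient (SameCycle.setoid σ) → Perm α :=
    Quotient.lift σ.cycleOf fun _ _ h => h.cycleOf_eq
  have hF : ∀ x, F ⟦x⟧ = σ.cycleOf x := fun _ => rfl
  have hcycles : #{q | F q ≠ 1} = σ.cycleType.card := by
    rw [cycleType_def, Multiset.card_map]
    refine Finset.card_bij (fun q _ => F q) ?_ ?_ ?_
    · rintro ⟨x⟩ hx
      exact cycleOf_ne_one_iff_mem_cycleFactorsFinset.1 (Finset.mem_filter.1 hx).2
    · intro q hq q' _ hqq'
      obtain ⟨x, rfl⟩ := Quotient.exists_rep q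
      obtain ⟨y, rfl⟩ := Quotient.exists_rep q'
      have hσx : σ x ≠ x := by simpa [hF, cycleOf_eq_one_iff] using hq
      rw [hF, hF] at hqq'
      have hmem : x ∈ (σ.cycleOf y).support := hqq' ▸ (mem_support_cycleOf_iff' hσx).2 .rfl
      exact Quotient.sound (mem_support_cycleOf_iff.1 hmem).1.symm
    · intro c hc
      obtain ⟨x, hx⟩ := (mem_cycleFactorsFinset_iff.1 hc).1.nonempty_support
      have hcx := cycle_is_cycleOf hx hc
      refine ⟨⟦x⟧, ?_, hcx.symm⟩
      simpa [hF, ← hcx] using (mem_cycleFactorsFinset_iff.1 hc).1.ne_one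
  have hfixed : #{x | σ x = x} = #{q | F q = 1} := by
    refine Finset.card_bij (fun x _ => ⟦x⟧) ?_ ?_ ?_
    · simp [hF, cycleOf_eq_one_iff]
    · intro x hx y _ hxy
      exact (Quotient.exact hxy).eq_of_left (Finset.mem_filter.1 hx).2
    · intro q hq
      obtain ⟨x, rfl⟩ := Quotient.exists_rep q
      exact ⟨x, by simpa [hF, cycleOf_eq_one_iff] using hq, rfl⟩
  rw [Nat.card_eq_fintype_card, ← Finset.card_univ,
    ← Finset.card_filter_add_card_filter_not (fun q => F q ≠ 1), hcycles, hfixed]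
  simp

end Equiv.Perm

section CycleCount

variable {m : ℕ}

theorem cycleCount_eq_finrank_fixedVectors (σ : Perm (Fin m)) :
    cycleCount σ = finrank ℚ (fixedVectors ℚ σ) := by
  rw [finrank_fixedVectors, nat_card_quotient_sameCycle]
  rfl

theorem cycleCount_add_cycleCount_le (σ τ : Perm (Fin m)) :
    cycleCount σ + cycleCount τ ≤ m + cycleCount (σ * τ) := by
  have hinf : fixedVectors ℚ σ ⊓ fixedVectors ℚ τ ≤ fixedVectors ℚ (σ * τ) :=
    fun v ⟨hσ, hτ⟩ x => (hσ (τ x)).trans (hτ x)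
  calc cycleCount σ + cycleCount τ
      = finrank ℚ ↥(fixedVectors ℚ σ ⊔ fixedVectors ℚ τ) +
          finrank ℚ ↥(fixedVectors ℚ σ ⊓ fixedVectors ℚ τ) := by
        rw [Submodule.finrank_sup_add_finrank_inf_eq, cycleCount_eq_finrank_fixedVectors,
          cycleCount_eq_finrank_fixedVectors]
    _ ≤ finrank ℚ (Fin m → ℚ) + finrank ℚ (fixedVectors ℚ (σ * τ)) :=
        add_le_add (Submodule.finrank_le _) (Submodule.finrank_mono hinf)
    _ = m + cycleCount (σ * τ) := by
        rw [Module.finrank_fin_fun, cycleCount_eq_finrank_fixedVectors]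

theorem cycleCount_one : cycleCount (1 : Perm (Fin m)) = m := by
  simp [cycleCount, fixedPointCount]

theorem le_cycleCount_swap_add_one (a b : Fin m) : m ≤ cycleCount (swap a b) + 1 := by
  rcases eq_or_ne a b with rfl | hab
  · rw [swap_self, ← Perm.one_def, cycleCount_one]
    omega
  · have hfix : fixedPointCount (swap a b) + 2 = m := by
      rw [← card_support_swap hab, fixedPointCount, Perm.support,
        Finset.card_filter_add_card_filter_not, card_univ, Fintype.card_fin]
    rw [cycleCount, (isCycle_swap hab).cycleType, Multiset.card_singleton]
    omega

theorem cycleCount_le_cycleCount_mul_swap_add_one (σ : Perm (Fin m)) (a b : Fin m) :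
    cycleCount σ ≤ cycleCount (σ * swap a b) + 1 := by
  have := cycleCount_add_cycleCount_le σ (swap a b)
  have := le_cycleCount_swap_add_one a b
  omega

end CycleCount

theorem Fin.val_swap_apply {m : ℕ} (a b x : Fin m) :
    (swap a b x : ℕ) =
      if (x : ℕ) = a then (b : ℕ) else if (x : ℕ) = b then (a : ℕ) else (x : ℕ) := by
  simp only [swap_apply_def, Fin.ext_iff]
  split_ifs <;> rfl

theorem Fin.val_natCast_of_le {n l : ℕ} (hl : l ≤ n + 1) :
    ((l : Fin (n + 1)) : ℕ) = if l = n + 1 then 0 else l := by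
  split_ifs with h
  · simp [h]
  · exact Fin.val_cast_of_lt (by omega)

section Overline

variable {n : ℕ}

theorem val_rho_apply (x : Fin (n + 1)) :
    (rho n x : ℕ) = if (x : ℕ) = n then 0 else (x : ℕ) + 1 := by
  rw [rho]
  split_ifs with h
  · simp [show x = Fin.last n from Fin.ext h]
  · exact coe_finRotate_of_ne_last fun hx => h (by simp [hx])

theorem IsBlockInterchange.val_apply_s3 {i j k l : ℕ} {β : Perm (Fin (n + 1))}
    (h : IsBlockInterchange n i j k l β) (p : Fin (n + 1)) :
    ((p : ℕ) < i ∨ l ≤ (p : ℕ)) ∧ (β p : ℕ) = p ∨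
    i ≤ (p : ℕ) ∧ (p : ℕ) < i + (l - k) ∧ (β p : ℕ) = k + (p - i) ∨
    i + (l - k) ≤ (p : ℕ) ∧ (p : ℕ) < i + (l - k) + (k - j) ∧
      (β p : ℕ) = j + (p - (i + (l - k))) ∨
    i + (l - k) + (k - j) ≤ (p : ℕ) ∧ (p : ℕ) < l ∧
      (β p : ℕ) = i + (p - (i + (l - k) + (k - j))) := by
  obtain ⟨-, -, -, -, -, hA, hB, hC, hD, hE⟩ := h
  by_cases h1 : (p : ℕ) < i
  · exact .inl ⟨.inl h1, congrArg Fin.val (hA p h1)⟩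
  by_cases h2 : (p : ℕ) < i + (l - k)
  · exact .inr (.inl ⟨by omega, h2, hB p (by omega) h2⟩)
  by_cases h3 : (p : ℕ) < i + (l - k) + (k - j)
  · exact .inr (.inr (.inl ⟨by omega, h3, hC p (by omega) h3⟩))
  by_cases h4 : (p : ℕ) < l
  · exact .inr (.inr (.inr ⟨by omega, h4, hD p (by omega) h4⟩))
  · exact .inl ⟨.inr (by omega), congrArg Fin.val (hE p (by omega))⟩

/-- The casts to `Fin (n + 1)` read `l = n + 1` as position `0`. -/
theorem IsBlockInterchange.rho_mul_eq {i j k l : ℕ} {β : Perm (Fin (n + 1))}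
    (h : IsBlockInterchange n i j k l β) :
    rho n * β = swap (j : Fin (n + 1)) l * swap (i : Fin (n + 1)) k * (β * rho n) := by
  ext y : 1
  apply Fin.ext
  have h₁ := h.val_apply_s3 y
  have h₂ := h.val_apply_s3 (rho n y)
  have hr := val_rho_apply y
  obtain ⟨hi, hij, hjk, hkl, hln, -⟩ := h
  simp only [Perm.mul_apply, val_rho_apply, Fin.val_swap_apply, Fin.val_natCast_of_le hln,
    Fin.val_cast_of_lt (show i < n + 1 by omega), Fin.val_cast_of_lt (show j < n + 1 by omega),
    Fin.val_cast_of_lt (show k < n + 1 by omega)]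
  have hy := y.isLt
  have hb := (β y).isLt
  generalize β (rho n y) = b₂ at *
  generalize rho n y = r at *
  generalize β y = b₁ at *
  split_ifs at hr ⊢ <;> omega

theorem IsBlockInterchange.ob_eq {i j k l : ℕ} {β : Perm (Fin (n + 1))}
    (h : IsBlockInterchange n i j k l β) :
    ob n β = swap (j : Fin (n + 1)) l * swap (i : Fin (n + 1)) k := by
  rw [ob, ← mul_assoc, ← mul_assoc, h.rho_mul_eq]
  group

theorem ob_one : ob n 1 = 1 := by
  simp [ob]

theorem ob_mul (π β : Perm (Fin (n + 1))) :
    ob n (π * β) = ob n π * (π * ob n β * π⁻¹) := by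
  simp only [ob]
  group

theorem cycleCount_ob_le_cycleCount_ob_mul_add_two (π : Perm (Fin (n + 1)))
    {β : Perm (Fin (n + 1))} (hβ : IsBlockInterchangePerm n β) :
    cycleCount (ob n π) ≤ cycleCount (ob n (π * β)) + 2 := by
  obtain ⟨i, j, k, l, h⟩ := hβ
  have hconj : π * ob n β * π⁻¹ = swap (π j) (π l) * swap (π i) (π k) := by
    rw [h.ob_eq, swap_apply_apply, swap_apply_apply]
    group
  rw [ob_mul, hconj, ← mul_assoc]
  have := cycleCount_le_cycleCount_mul_swap_add_one (ob n π) (π j) (π l)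
  have := cycleCount_le_cycleCount_mul_swap_add_one (ob n π * swap (π j) (π l)) (π i) (π k)
  omega

theorem le_cycleCount_ob_prod_add_two_mul_length (L : List (Perm (Fin (n + 1))))
    (hL : ∀ β ∈ L, IsBlockInterchangePerm n β) :
    n + 1 ≤ cycleCount (ob n L.prod) + 2 * L.length := by
  induction L using List.reverseRecOn with
  | nil => simp [ob_one, cycleCount_one]
  | append_singleton L β ih =>
    have := ih fun g hg => hL g (by simp [hg])
    have := cycleCount_ob_le_cycleCount_ob_mul_add_two L.prod (hL β (by simp))
    rw [List.prod_append, List.prod_singleton, List.length_append, List.length_singleton]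
    omega

end Overline

section Factorisation

variable {n : ℕ}

theorem isBlockInterchangePerm_swap_of_lt {a b : Fin (n + 1)} (ha : a ≠ 0) (hab : a < b) :
    IsBlockInterchangePerm n (swap a b) := by
  have ha' : 1 ≤ (a : ℕ) := Nat.one_le_iff_ne_zero.2 (Fin.val_ne_zero_iff.2 ha)
  have hab' : (a : ℕ) < b := hab
  refine ⟨a, a + 1, b, b + 1, ha', by omega, by omega, by omega, by omega,
    ?_, ?_, ?_, ?_, ?_⟩ <;>
    intro p <;> simp only [Fin.ext_iff, Fin.val_swap_apply] <;> intros <;> split_ifs <;> omega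

theorem isBlockInterchangePerm_swap {a b : Fin (n + 1)} (ha : a ≠ 0) (hb : b ≠ 0)
    (hab : a ≠ b) :
    IsBlockInterchangePerm n (swap a b) := by
  rcases hab.lt_or_gt with hab | hab
  · exact isBlockInterchangePerm_swap_of_lt ha hab
  · exact swap_comm a b ▸ isBlockInterchangePerm_swap_of_lt hb hab

theorem exists_list_isBlockInterchangePerm_prod_eq {π : Perm (Fin (n + 1))} (hπ : π 0 = 0) :
    ∃ L : List (Perm (Fin (n + 1))),
      (∀ β ∈ L, IsBlockInterchangePerm n β) ∧ L.prod = π := by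
  have hfix : ∀ x, π x ≠ 0 ↔ x ≠ 0 := fun _ => π.injective.ne_iff' hπ
  have hsupp : ∀ x, π x ≠ x → x ≠ 0 := by
    rintro x hx rfl
    exact hx hπ
  rw [← ofSubtype_subtypePerm (p := (· ≠ 0)) hfix hsupp]
  induction π.subtypePerm (p := (· ≠ 0)) hfix using swap_induction_on with
  | one => exact ⟨[], by simp, by simp⟩
  | swap_mul σ x y hxy ih =>
    obtain ⟨L, hL, hprod⟩ := ih
    refine ⟨swap (x : Fin (n + 1)) y :: L, ?_, ?_⟩
    · simp only [List.mem_cons, forall_eq_or_imp]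
      exact ⟨isBlockInterchangePerm_swap x.2 y.2 (Subtype.coe_injective.ne hxy), hL⟩
    · rw [List.prod_cons, hprod, map_mul, ofSubtype_swap_eq]

theorem exists_list_length_eq_bid {π : Perm (Fin (n + 1))} (hπ : π 0 = 0) :
    ∃ L : List (Perm (Fin (n + 1))), L.length = bid n π ∧
      (∀ β ∈ L, IsBlockInterchangePerm n β) ∧ L.prod = π := by
  obtain ⟨L, hL, hprod⟩ := exists_list_isBlockInterchangePerm_prod_eq hπ
  exact Nat.sInf_mem (s := {t | ∃ L : List (Perm (Fin (n + 1))), L.length = t ∧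
    (∀ β ∈ L, IsBlockInterchangePerm n β) ∧ L.prod = π}) ⟨L.length, L, rfl, hL, hprod⟩

end Factorisation

/-- for every permutation π of {1,…,n} (extended to {0,…,n} by fixing 0),
bid(π) ≥ (n + 1 − c(overline(π))) / 2. -/
theorem bid_lower_bound (n : ℕ) (π : Equiv.Perm (Fin (n + 1))) (hπ : π 0 = 0) :
    ((n : ℚ) + 1 - cycleCount (ob n π)) / 2 ≤ (bid n π : ℚ) := by
  obtain ⟨L, hlen, hL, hprod⟩ := exists_list_length_eq_bid hπ
  have h := le_cycleCount_ob_prod_add_two_mul_length L hL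
  rw [hlen, hprod] at h
  have hq : (n : ℚ) + 1 ≤ cycleCount (ob n π) + 2 * bid n π := by exact_mod_cast h
  linarith
end

section
/- For every permutation π of {1,2,…,n}, the number of prefix transposition breakpoints satisfies ptb(π) = n + 1 − c₁(overline(π)) + ε, where c₁(overline(π)) is the number of fixed points of the permutation overline(π) of {0,1,…,n}, and ε = 1 if π_1 = 1 and ε = 0 otherwise. -/
/-- The extended sequence π̃ = ⟨0 π_1 π_2 ⋯ π_n (n+1)⟩ of a permutation π of {1,…,n}
(given as a permutation of {0,1,…,n} fixing 0), as a function on indices 0,…,n+1. -/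
def ptilde (n : ℕ) (π : Equiv.Perm (Fin (n + 1))) (m : ℕ) : ℕ :=
  if h : m < n + 1 then (π ⟨m, h⟩ : ℕ) else n + 1

/-- The number ptb(π) of prefix transposition breakpoints of π: the number of indices
0 ≤ i ≤ n such that the pair (π̃_i, π̃_{i+1}) is a breakpoint, i.e. i = 0 or
π̃_{i+1} ≠ π̃_i + 1. -/
def ptb (n : ℕ) (π : Equiv.Perm (Fin (n + 1))) : ℕ :=
  ((Finset.range (n + 1)).filter fun m =>
    m = 0 ∨ ptilde n π (m + 1) ≠ ptilde n π m + 1).card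

/-!
Since `ob n π = ρ · π ρ⁻¹ π⁻¹`, the point `π (m + 1)` is fixed by `overline(π)` exactly when
`π (m + 1) = π m + 1` in `Fin (n + 1)`, so `c₁(overline(π))` counts the cyclic adjacencies of `π`.
As `π 0 = 0`, the cyclic adjacency at `m` is the non-breakpoint condition `π̃_{m+1} = π̃_m + 1`
(at `m = n` both say `π_n = n`). Hence the fixed points are the non-breakpoints of `π̃`, except
that position `0` is declared a breakpoint even when `π_1 = 1`, which accounts for `ε`.
-/

open Finset

lemma ob_apply (n : ℕ) (π : Equiv.Perm (Fin (n + 1))) (x : Fin (n + 1)) :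
    ob n π x = π (π⁻¹ x - 1) + 1 := by
  simp [ob, rho]

lemma fixedPointCount_ob (n : ℕ) (π : Equiv.Perm (Fin (n + 1))) :
    fixedPointCount (ob n π) = #{m : Fin (n + 1) | π (m + 1) = π m + 1} := by
  refine (card_equiv ((Equiv.addRight 1).trans π) fun m => ?_).symm
  simp [ob_apply, eq_comm]

lemma Fin.eq_add_one_iff_val_eq {n : ℕ} {a b : Fin (n + 1)} (hb : b ≠ 0) :
    b = a + 1 ↔ (b : ℕ) = a + 1 := by
  rw [Fin.ext_iff, Fin.val_add_one]
  split_ifs with ha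
  · simp [Fin.val_ne_zero_iff.mpr hb, ha, b.isLt.ne]
  · rfl

section ptilde

variable {n : ℕ} (π : Equiv.Perm (Fin (n + 1)))

lemma ptilde_val (m : Fin (n + 1)) : ptilde n π m = π m := by
  simp [ptilde, m.isLt]

lemma ptilde_self_add_one : ptilde n π (n + 1) = n + 1 := by
  simp [ptilde]

lemma ptilde_succ_eq_iff (hπ : π 0 = 0) (m : Fin (n + 1)) :
    ptilde n π (m + 1) = ptilde n π m + 1 ↔ π (m + 1) = π m + 1 := by
  induction m using Fin.lastCases with
  | last =>
    rw [ptilde_val, Fin.val_last, ptilde_self_add_one, Fin.last_add_one, hπ,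
      add_left_inj, ← Fin.last_add_one n, add_left_inj, Fin.ext_iff, Fin.val_last]
  | cast k =>
    have hk : π k.succ ≠ 0 := by rw [← hπ]; exact π.injective.ne (Fin.succ_ne_zero k)
    rw [Fin.coeSucc_eq_succ, Fin.eq_add_one_iff_val_eq hk, ← ptilde_val, ← ptilde_val,
      Fin.val_succ, Fin.val_castSucc]

end ptilde

lemma card_filter_eq_or_not {α : Type*} [DecidableEq α] (p : α → Prop) [DecidablePred p]
    {s : Finset α} {a : α} (ha : a ∈ s) :
    #{x ∈ s | x = a ∨ ¬p x} = #s - #{x ∈ s | p x} + if p a then 1 else 0 := by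
  have hsum : #{x ∈ s | x = a ∨ ¬p x} + #{x ∈ s | p x} = #s + if p a then 1 else 0 := by
    calc #{x ∈ s | x = a ∨ ¬p x} + #{x ∈ s | p x}
        = ∑ x ∈ s, (1 + if a = x then (if p a then 1 else 0) else 0) := by
          rw [card_filter, card_filter, ← sum_add_distrib]
          refine sum_congr rfl fun x _ => ?_
          split_ifs <;> simp_all
      _ = #s + if p a then 1 else 0 := by
          rw [sum_add_distrib, sum_ite_eq, if_pos ha, card_eq_sum_ones]
  have : #{x ∈ s | p x} ≤ #s := card_filter_le s p
  omega

/-- for every permutation π of {1,…,n} (extended to {0,…,n} by fixing 0),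
ptb(π) = n + 1 − c₁(overline(π)) + ε, where ε = 1 if π_1 = 1 and ε = 0 otherwise. -/
theorem ptb_eq (n : ℕ) (π : Equiv.Perm (Fin (n + 1))) (hπ : π 0 = 0) :
    ptb n π = n + 1 - fixedPointCount (ob n π) + (if π 1 = 1 then 1 else 0) := by
  have hfix : fixedPointCount (ob n π) =
      #{m ∈ range (n + 1) | ptilde n π (m + 1) = ptilde n π m + 1} := by
    rw [fixedPointCount_ob]
    simp only [card_filter, ← Fin.sum_univ_eq_sum_range, ptilde_succ_eq_iff π hπ]
  have hfirst : ptilde n π (0 + 1) = ptilde n π 0 + 1 ↔ π 1 = 1 := by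
    simpa [hπ] using ptilde_succ_eq_iff π hπ 0
  rw [ptb, hfix]
  simp only [ne_eq]
  rw [card_filter_eq_or_not _ (mem_range.2 n.succ_pos), card_range]
  simp only [hfirst]
end

section
/- Let π be an even permutation of {1,2,…,n}, and let d¹₃(π) be the least t such that π can be written as a product of t 3-cycles each of which moves the element 1. Then d¹₃(π) = (n + c(π))/2 − c₁(π) − ε, where c(π) is the number of cycles of π (counting fixed points), c₁(π) is the number of fixed points of π, and ε = 0 if π(1) = 1 and ε = 1 otherwise. -/
/-!
For a base point `o` put `μ(σ) = |supp σ| + #(cycles of length ≥ 2) − 2·[σ o ≠ o]`; for `π`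
fixing `0` and `o = 1` the right-hand side of the theorem is `μ(π)/2`. A 3-cycle moving `o` is a
product of two transpositions `(o x)`, and right multiplication by `(o x)` changes the number of
cycles (fixed points included) by one and the support only at `x`; hence it lowers `μ` by at most
one, and `μ(π) ≤ 2t` for every factorisation of `π` into `t` such 3-cycles. Conversely an even
`σ ≠ 1` fixing `z ≠ o` admits a 3-cycle `g` moving `o` and fixing `z` with `μ(σ g) = μ(σ) − 2`:
if `o, σ o, σ² o` are distinct, split `σ o` and then `σ² o` off the cycle of `o`; otherwise some
moved point `c` lies outside the cycle of `o` (else `σ` would be a transposition), and one merges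
its cycle with that of `o` and then splits `σ c` off.
-/

/-- The number of fixed points of σ among the elements {1,…,n}, i.e. c₁(σ) for σ viewed
as a permutation of {1,…,n} (σ is a permutation of {0,1,…,n} fixing 0). -/
def fixedPointCountPos (n : ℕ) (σ : Equiv.Perm (Fin (n + 1))) : ℕ :=
  (Finset.univ.filter fun x : Fin (n + 1) => x ≠ 0 ∧ σ x = x).card

/-- The number of cycles of σ viewed as a permutation of {1,…,n}, counting fixed points
as 1-cycles (σ is a permutation of {0,1,…,n} fixing 0; its cycles of length ≥ 2,
recorded by `cycleType`, all live in {1,…,n}). -/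
def cycleCountPos (n : ℕ) (σ : Equiv.Perm (Fin (n + 1))) : ℕ :=
  σ.cycleType.card + fixedPointCountPos n σ

/-- d¹₃(π): the least t such that π is a product of t 3-cycles, each of which moves the
element 1 (and each of which is a permutation of {1,…,n}, i.e. fixes 0). -/
noncomputable def d13 (n : ℕ) (π : Equiv.Perm (Fin (n + 1))) : ℕ :=
  sInf {t | ∃ L : List (Equiv.Perm (Fin (n + 1))), L.length = t ∧
    (∀ g ∈ L, g.IsThreeCycle ∧ g 0 = 0 ∧ g 1 ≠ 1) ∧ L.prod = π}

open Finset

namespace Equiv.Perm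

variable {α : Type*} {σ τ : Perm α} {s : Set α} {a b x y : α}

theorem SameCycle.mem_of_mapsTo [Finite α] (hs : Set.MapsTo σ s s) (hxy : σ.SameCycle x y)
    (hx : x ∈ s) : y ∈ s := by
  obtain ⟨n, rfl⟩ := hxy.exists_nat_pow_eq
  rw [coe_pow]
  exact hs.iterate n hx

theorem sameCycle_iff_of_eqOn [Finite α] (h : Set.EqOn τ σ {y | σ.SameCycle x y}) :
    τ.SameCycle x y ↔ σ.SameCycle x y := by
  have hτσ : ∀ {y}, τ.SameCycle x y → σ.SameCycle x y := fun hy =>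
    hy.mem_of_mapsTo (s := {y | σ.SameCycle x y})
      (fun y hy => show σ.SameCycle x (τ y) by rw [h hy]; exact sameCycle_apply_right.2 hy) .rfl
  refine ⟨hτσ, fun hy => hy.mem_of_mapsTo (s := {y | τ.SameCycle x y}) (fun y hy' => ?_) .rfl⟩
  show τ.SameCycle x (σ y)
  rw [← h (hτσ hy')]
  exact sameCycle_apply_right.2 hy'

variable [DecidableEq α]

theorem mul_swap_apply_of_ne_of_ne (ha : y ≠ a) (hb : y ≠ b) : (σ * swap a b) y = σ y := by
  rw [mul_apply, swap_apply_of_ne_of_ne ha hb]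

theorem sameCycle_mul_swap_of_not_sameCycle [Finite α] (h : ¬σ.SameCycle a b) :
    (σ * swap a b).SameCycle a b := by
  by_contra hab
  -- `W` avoids `a` and `b`, where `σ * swap a b` and `σ` differ, so it is `σ`-invariant.
  let W : Set α := {y | σ.SameCycle b y ∧ (σ * swap a b).SameCycle a y}
  have hW : Set.MapsTo σ W W := by
    rintro y ⟨hby, hay⟩
    have hτ : (σ * swap a b) y = σ y :=
      mul_swap_apply_of_ne_of_ne (by rintro rfl; exact h hby.symm) (by rintro rfl; exact hab hay)
    exact ⟨sameCycle_apply_right.2 hby, hτ ▸ sameCycle_apply_right.2 hay⟩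
  have hσb : σ b ∈ W := ⟨sameCycle_apply_right.2 .rfl, ⟨1, by simp⟩⟩
  exact hab ((sameCycle_apply_left.2 .rfl).mem_of_mapsTo hW hσb).2

theorem sameCycle_mul_swap_of_not_sameCycle_of_or [Finite α] (h : ¬σ.SameCycle a b)
    (hy : σ.SameCycle a y ∨ σ.SameCycle b y) : (σ * swap a b).SameCycle a y := by
  have hab := sameCycle_mul_swap_of_not_sameCycle h
  let T : Set α := {y | (σ * swap a b).SameCycle a y}
  have hT : Set.MapsTo σ T T := by
    intro w (hw : (σ * swap a b).SameCycle a w)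
    show (σ * swap a b).SameCycle a (σ w)
    by_cases hwa : w = a
    · subst hwa
      simpa using sameCycle_apply_right.2 hab
    by_cases hwb : w = b
    · subst hwb
      simpa using sameCycle_apply_right.2 (SameCycle.refl (σ * swap a w) a)
    rw [← mul_swap_apply_of_ne_of_ne hwa hwb]
    exact sameCycle_apply_right.2 hw
  rcases hy with hy | hy
  · exact hy.mem_of_mapsTo (s := T) hT .rfl
  · exact hy.mem_of_mapsTo (s := T) hT hab

section Fintype

variable [Fintype α]

def orbitFinset (σ : Perm α) (x : α) : Finset α := {y | σ.SameCycle x y}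

@[simp]
theorem mem_orbitFinset : y ∈ orbitFinset σ x ↔ σ.SameCycle x y := by
  simp [orbitFinset]

theorem SameCycle.orbitFinset_eq (h : σ.SameCycle x y) : orbitFinset σ x = orbitFinset σ y := by
  ext z
  simp only [mem_orbitFinset]
  exact ⟨h.symm.trans, h.trans⟩

theorem sum_inv_card_orbitFinset (σ : Perm α) (x : α) :
    ∑ y ∈ orbitFinset σ x, (#(orbitFinset σ y) : ℚ)⁻¹ = 1 := by
  rw [sum_congr rfl fun y hy => by rw [← (mem_orbitFinset.1 hy).orbitFinset_eq], sum_const,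
    nsmul_eq_mul, mul_inv_cancel₀]
  exact Nat.cast_ne_zero.2 (card_ne_zero_of_mem (mem_orbitFinset.2 .rfl))

/-- The number of cycles of `σ`, fixed points included: each orbit contributes `1` to the sum. -/
def numCycles (σ : Perm α) : ℚ := ∑ x, (#(orbitFinset σ x) : ℚ)⁻¹

theorem numCycles_eq (σ : Perm α) :
    numCycles σ = Fintype.card α - #σ.support + σ.cycleType.card := by
  have hfix : ∀ x ∉ σ.support, (#(orbitFinset σ x) : ℚ)⁻¹ = 1 := fun x hx => by
    have : orbitFinset σ x = {x} := by
      ext y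
      simp only [mem_orbitFinset, mem_singleton]
      exact ⟨fun h => (h.eq_of_left (notMem_support.1 hx)).symm, by rintro rfl; rfl⟩
    simp [this]
  have hcycle : ∀ c ∈ σ.cycleFactorsFinset,
      ∑ x ∈ σ.support with σ.cycleOf x = c, (#(orbitFinset σ x) : ℚ)⁻¹ = 1 := fun c hc => by
    have horbit : ∀ x ∈ c.support, orbitFinset σ x = c.support := fun x hx => by
      ext y
      rw [mem_orbitFinset, cycle_is_cycleOf hx hc, mem_support_cycleOf_iff]
      simp [mem_cycleFactorsFinset_support_le hc hx]
    have hfiber : {x ∈ σ.support | σ.cycleOf x = c} = c.support := by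
      ext x
      rw [mem_filter, ← eq_cycleOf_of_mem_cycleFactorsFinset_iff σ c hc, eq_comm]
      exact ⟨And.right, fun h => ⟨mem_cycleFactorsFinset_support_le hc
        ((eq_cycleOf_of_mem_cycleFactorsFinset_iff σ c hc x).1 h), h⟩⟩
    rw [hfiber, sum_congr rfl fun x hx => by rw [horbit x hx], sum_const, nsmul_eq_mul,
      mul_inv_cancel₀]
    exact Nat.cast_ne_zero.2 (card_ne_zero.2 (mem_cycleFactorsFinset_iff.1 hc).1.nonempty_support)
  rw [numCycles, ← sum_add_sum_compl σ.support, sum_congr rfl fun x hx => hfix x (mem_compl.1 hx),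
    ← sum_fiberwise_of_maps_to fun x => cycleOf_mem_cycleFactorsFinset_iff.2,
    sum_congr rfl hcycle]
  simp only [sum_const, nsmul_eq_mul, mul_one, card_compl, cycleType_def, Multiset.card_map,
    card_val]
  rw [Nat.cast_sub (card_le_univ _)]
  ring

theorem numCycles_mul_swap_sub (σ : Perm α) (a b : α) :
    numCycles (σ * swap a b) - numCycles σ = ∑ y ∈ orbitFinset σ a ∪ orbitFinset σ b,
      ((#(orbitFinset (σ * swap a b) y) : ℚ)⁻¹ - (#(orbitFinset σ y) : ℚ)⁻¹) := by
  rw [numCycles, numCycles, ← sum_sub_distrib,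
    ← sum_add_sum_compl (orbitFinset σ a ∪ orbitFinset σ b), add_eq_left]
  refine sum_eq_zero fun y hy => ?_
  have hy' : ¬σ.SameCycle a y ∧ ¬σ.SameCycle b y := by simpa using hy
  have : orbitFinset (σ * swap a b) y = orbitFinset σ y := by
    ext w
    simp only [mem_orbitFinset]
    refine sameCycle_iff_of_eqOn fun w (hw : σ.SameCycle y w) => mul_swap_apply_of_ne_of_ne ?_ ?_
    · rintro rfl; exact hy'.1 hw.symm
    · rintro rfl; exact hy'.2 hw.symm
  rw [this, sub_self]

theorem orbitFinset_mul_swap_subset (hy : y ∈ orbitFinset σ a ∪ orbitFinset σ b) :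
    orbitFinset (σ * swap a b) y ⊆ orbitFinset σ a ∪ orbitFinset σ b := by
  have hS : Set.MapsTo (σ * swap a b) ↑(orbitFinset σ a ∪ orbitFinset σ b)
      ↑(orbitFinset σ a ∪ orbitFinset σ b) := by
    intro z hz
    simp only [coe_union, Set.mem_union, mem_coe, mem_orbitFinset] at hz ⊢
    rw [mul_apply, sameCycle_apply_right, sameCycle_apply_right]
    rcases eq_or_ne z a with rfl | hza
    · simp [SameCycle.rfl]
    rcases eq_or_ne z b with rfl | hzb
    · simp [SameCycle.rfl]
    rwa [swap_apply_of_ne_of_ne hza hzb]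
  exact fun w hw => mem_coe.1 ((mem_orbitFinset.1 hw).mem_of_mapsTo hS hy)

theorem numCycles_sub_one_le_numCycles_mul_swap (σ : Perm α) (a b : α) :
    numCycles σ - 1 ≤ numCycles (σ * swap a b) := by
  set S := orbitFinset σ a ∪ orbitFinset σ b
  have hσ : ∑ y ∈ S, (#(orbitFinset σ y) : ℚ)⁻¹ ≤ 2 := by
    have := sum_union_inter (s₁ := orbitFinset σ a) (s₂ := orbitFinset σ b)
      (f := fun y => (#(orbitFinset σ y) : ℚ)⁻¹)
    rw [sum_inv_card_orbitFinset, sum_inv_card_orbitFinset] at this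
    have : 0 ≤ ∑ y ∈ orbitFinset σ a ∩ orbitFinset σ b, (#(orbitFinset σ y) : ℚ)⁻¹ :=
      sum_nonneg fun _ _ => by positivity
    linarith
  have hτ : 1 ≤ ∑ y ∈ S, (#(orbitFinset (σ * swap a b) y) : ℚ)⁻¹ := by
    have hS : (0 : ℚ) < #S :=
      Nat.cast_pos.2 (card_pos.2 ⟨a, mem_union_left _ (mem_orbitFinset.2 .rfl)⟩)
    calc (1 : ℚ) = ∑ y ∈ S, (#S : ℚ)⁻¹ := by
          rw [sum_const, nsmul_eq_mul, mul_inv_cancel₀ hS.ne']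
      _ ≤ _ := sum_le_sum fun y hy =>
          inv_anti₀ (Nat.cast_pos.2 (card_pos.2 ⟨y, mem_orbitFinset.2 .rfl⟩))
            (Nat.cast_le.2 (card_le_card (orbitFinset_mul_swap_subset hy)))
  have := numCycles_mul_swap_sub σ a b
  rw [sum_sub_distrib] at this
  linarith

theorem numCycles_mul_swap_of_not_sameCycle (h : ¬σ.SameCycle a b) :
    numCycles (σ * swap a b) = numCycles σ - 1 := by
  set S := orbitFinset σ a ∪ orbitFinset σ b
  have horbit : ∀ y ∈ S, orbitFinset (σ * swap a b) y = S := fun y hy => by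
    refine (orbitFinset_mul_swap_subset hy).antisymm fun w hw => mem_orbitFinset.2 ?_
    simp only [S, mem_union, mem_orbitFinset] at hy hw
    exact (sameCycle_mul_swap_of_not_sameCycle_of_or h hy).symm.trans
      (sameCycle_mul_swap_of_not_sameCycle_of_or h hw)
  have hτ : ∑ y ∈ S, (#(orbitFinset (σ * swap a b) y) : ℚ)⁻¹ = 1 := by
    rw [sum_congr rfl fun y hy => by rw [horbit y hy], sum_const, nsmul_eq_mul, mul_inv_cancel₀]
    exact Nat.cast_ne_zero.2 (card_ne_zero_of_mem (mem_union_left _ (mem_orbitFinset.2 .rfl)))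
  have hσ : ∑ y ∈ S, (#(orbitFinset σ y) : ℚ)⁻¹ = 2 := by
    rw [sum_union (disjoint_left.2 fun y hya hyb =>
        h ((mem_orbitFinset.1 hya).trans (mem_orbitFinset.1 hyb).symm)),
      sum_inv_card_orbitFinset, sum_inv_card_orbitFinset]
    norm_num
  have := numCycles_mul_swap_sub σ a b
  rw [sum_sub_distrib, hτ, hσ] at this
  linarith

theorem numCycles_mul_swap_apply (h : σ a ≠ a) :
    numCycles (σ * swap a (σ a)) = numCycles σ + 1 := by
  have hfix : (σ * swap a (σ a)) (σ a) = σ a := by simp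
  have hsplit : ¬(σ * swap a (σ a)).SameCycle a (σ a) := fun hs => h (hs.symm.eq_of_left hfix)
  have := numCycles_mul_swap_of_not_sameCycle hsplit
  rw [mul_swap_mul_self] at this
  linarith

end Fintype

section PointedCost

variable [Fintype α] {o : α}

def pointedCost (o : α) (σ : Perm α) : ℚ :=
  #σ.support + σ.cycleType.card - 2 * if σ o = o then 0 else 1

theorem pointedCost_one (o : α) : pointedCost o 1 = 0 := by
  simp [pointedCost]

theorem pointedCost_nonneg (o : α) (σ : Perm α) : 0 ≤ pointedCost o σ := by
  unfold pointedCost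
  split_ifs with h
  · rw [mul_zero, sub_zero]
    positivity
  · have : (2 : ℚ) ≤ #σ.support := by
      exact_mod_cast one_lt_card_support_of_ne_one fun h1 : σ = 1 => h (by simp [h1])
    have : (0 : ℚ) ≤ σ.cycleType.card := by positivity
    linarith

theorem pointedCost_eq_numCycles (o : α) (σ : Perm α) :
    pointedCost o σ = 2 * #(σ.support.erase o) + numCycles σ - Fintype.card α := by
  rw [pointedCost, numCycles_eq]
  split_ifs with h
  · rw [erase_eq_of_notMem (notMem_support.2 h)]
    ring
  · rw [← card_erase_add_one (mem_support.2 h)]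
    push_cast
    ring

theorem pointedCost_mul_swap (hx : x ≠ o) (σ : Perm α) :
    pointedCost o (σ * swap o x) = pointedCost o σ + (numCycles (σ * swap o x) - numCycles σ) +
      2 * ((if σ o = x then 0 else 1) - if σ x = x then 0 else 1) := by
  have hsplit : ∀ ρ : Perm α, (#(ρ.support.erase o) : ℚ) =
      #((ρ.support.erase o).erase x) + if ρ x = x then 0 else 1 := fun ρ => by
    split_ifs with h
    · rw [erase_eq_of_notMem (s := ρ.support.erase o) (by simp [h]), add_zero]
    · rw [← card_erase_add_one (mem_erase.2 ⟨hx, mem_support.2 h⟩), Nat.cast_succ]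
  have hrest : ((σ * swap o x).support.erase o).erase x = (σ.support.erase o).erase x := by
    ext y
    simp only [mem_erase, mem_support, ne_eq, and_congr_right_iff]
    intro hyx hyo
    rw [mul_swap_apply_of_ne_of_ne hyo hyx]
  have hx' : (σ * swap o x) x = σ o := by simp
  rw [pointedCost_eq_numCycles, pointedCost_eq_numCycles, hsplit, hsplit σ, hrest]
  simp only [hx']
  ring

theorem pointedCost_mul_swap_apply (h : σ o ≠ o) :
    pointedCost o (σ * swap o (σ o)) = pointedCost o σ - 1 := by
  rw [pointedCost_mul_swap h, numCycles_mul_swap_apply h, if_pos rfl,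
    if_neg fun h' => h (σ.injective h')]
  ring

theorem pointedCost_mul_swap_of_not_sameCycle (h : ¬σ.SameCycle o x) (hx : σ x ≠ x) :
    pointedCost o (σ * swap o x) = pointedCost o σ - 1 := by
  have hxo : x ≠ o := by rintro rfl; exact h .rfl
  rw [pointedCost_mul_swap hxo, numCycles_mul_swap_of_not_sameCycle h,
    if_neg fun h' => h ⟨1, by simpa using h'⟩, if_neg hx]
  ring

theorem pointedCost_sub_one_le_pointedCost_mul_swap (hx : x ≠ o) (σ : Perm α) :
    pointedCost o σ - 1 ≤ pointedCost o (σ * swap o x) := by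
  by_cases hσo : σ o = x
  · subst hσo
    rw [pointedCost_mul_swap_apply hx]
  · rw [pointedCost_mul_swap hx, if_neg hσo]
    have := numCycles_sub_one_le_numCycles_mul_swap σ o x
    split_ifs <;> linarith

theorem pointedCost_sub_two_le_pointedCost_mul {g : Perm α} (hg : g.IsThreeCycle) (hgo : g o ≠ o)
    (σ : Perm α) : pointedCost o σ - 2 ≤ pointedCost o (σ * g) := by
  have hnodup := hg.nodup_iff_mem_support.2 (mem_support.2 hgo)
  simp only [List.nodup_cons, List.mem_cons, List.not_mem_nil, or_false, not_or] at hnodup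
  have hdecomp : g = swap o (g (g o)) * swap o (g o) := by
    conv_lhs => rw [hg.eq_swap_mul_swap_iff_mem_support.2 (mem_support.2 hgo)]
    rw [mul_swap_eq_swap_mul, swap_apply_right,
      swap_apply_of_ne_of_ne (Ne.symm hnodup.1.2) (Ne.symm hnodup.2.1)]
  rw [hdecomp, ← mul_assoc]
  linarith [pointedCost_sub_one_le_pointedCost_mul_swap (Ne.symm hnodup.1.2) σ,
    pointedCost_sub_one_le_pointedCost_mul_swap (o := o) (Ne.symm hnodup.1.1)
      (σ * swap o (g (g o)))]

theorem pointedCost_prod_le {L : List (Perm α)} (hL : ∀ g ∈ L, g.IsThreeCycle ∧ g o ≠ o) :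
    pointedCost o L.prod ≤ 2 * L.length := by
  induction L using List.reverseRecOn with
  | nil => simp [pointedCost_one]
  | append_singleton L g ih =>
    obtain ⟨hg, hgo⟩ := hL g (by simp)
    have hstep := pointedCost_sub_two_le_pointedCost_mul hg.inv
      (by rwa [Ne, inv_eq_iff_eq, eq_comm]) (L.prod * g)
    rw [mul_inv_cancel_right] at hstep
    have := ih fun g' hg' => hL g' (by simp [hg'])
    simp only [List.prod_append, List.prod_singleton, List.length_append, List.length_singleton]
    push_cast
    linarith

theorem exists_isThreeCycle_pointedCost_mul_of_mul_swap {z : α} (hzo : z ≠ o) (hz : σ z = z)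
    (hxo : x ≠ o) (hx : σ x ≠ x) (hσx : σ x ≠ o)
    (h : pointedCost o (σ * swap o x) = pointedCost o σ - 1) :
    ∃ g : Perm α, g.IsThreeCycle ∧ g z = z ∧ g o ≠ o ∧
      pointedCost o (σ * g) = pointedCost o σ - 2 := by
  have hxz : x ≠ z := by rintro rfl; exact hx hz
  have hσxz : σ x ≠ z := fun h' => hxz (σ.injective (h'.trans hz.symm))
  have hτo : (σ * swap o x) o = σ x := by simp
  refine ⟨swap o x * swap o (σ x), isThreeCycle_swap_mul_swap_same hxo.symm hσx.symm hx.symm,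
    ?_, ?_, ?_⟩
  · rw [mul_apply, swap_apply_of_ne_of_ne hzo hσxz.symm, swap_apply_of_ne_of_ne hzo hxz.symm]
  · rwa [mul_apply, swap_apply_left, swap_apply_of_ne_of_ne hσx hx]
  · rw [← mul_assoc, ← hτo, pointedCost_mul_swap_apply (hτo ▸ hσx), h]
    ring

theorem exists_apply_ne_and_not_sameCycle (hσ : σ ≠ 1) (hsign : sign σ = 1) (h : σ (σ o) = o) :
    ∃ x, σ x ≠ x ∧ ¬σ.SameCycle o x := by
  by_contra! hall
  obtain ⟨y, hy⟩ : ∃ y, σ y ≠ y := by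
    by_contra! hfix
    exact hσ (Equiv.ext hfix)
  have ho : σ o ≠ o := mem_support.1 ((hall y hy).mem_support_iff.2 (mem_support.2 hy))
  have hcycle : σ.IsCycle := ⟨o, ho, hall⟩
  have hsq : σ ^ 2 = 1 := hcycle.pow_eq_one_iff.2 ⟨o, ho, by rw [sq, mul_apply, h]⟩
  have hcard : #σ.support = 2 := by
    rw [← hcycle.orderOf, orderOf_eq_prime hsq hσ]
  rw [hcycle.sign, hcard] at hsign
  norm_num at hsign

theorem exists_isThreeCycle_pointedCost_mul (hσ : σ ≠ 1) (hsign : sign σ = 1) {z : α}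
    (hzo : z ≠ o) (hz : σ z = z) :
    ∃ g : Perm α, g.IsThreeCycle ∧ g z = z ∧ g o ≠ o ∧
      pointedCost o (σ * g) = pointedCost o σ - 2 := by
  by_cases h : σ o ≠ o ∧ σ (σ o) ≠ o
  · exact exists_isThreeCycle_pointedCost_mul_of_mul_swap hzo hz h.1
      (fun h' => h.1 (σ.injective h')) h.2 (pointedCost_mul_swap_apply h.1)
  have h2 : σ (σ o) = o := by
    by_contra h2
    exact h ⟨fun ho => h2 (by rw [ho, ho]), h2⟩
  obtain ⟨x, hx, hox⟩ := exists_apply_ne_and_not_sameCycle hσ hsign h2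
  have hxo : x ≠ o := by rintro rfl; exact hox .rfl
  have hσx : σ x ≠ o := fun h' => hox (sameCycle_apply_right.1 (h' ▸ .rfl))
  exact exists_isThreeCycle_pointedCost_mul_of_mul_swap hzo hz hxo hx hσx
    (pointedCost_mul_swap_of_not_sameCycle hox hx)

theorem exists_list_isThreeCycle_prod_eq {z : α} (hzo : z ≠ o) (hsign : sign σ = 1)
    (hz : σ z = z) :
    ∃ L : List (Perm α), (∀ g ∈ L, g.IsThreeCycle ∧ g z = z ∧ g o ≠ o) ∧ L.prod = σ ∧
      (2 * L.length : ℚ) = pointedCost o σ := by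
  obtain ⟨k, hk⟩ := exists_nat_gt (pointedCost o σ)
  induction k generalizing σ with
  | zero => exact absurd hk (not_lt.2 (by simpa using pointedCost_nonneg o σ))
  | succ k ih =>
    by_cases hσ : σ = 1
    · exact ⟨[], by simp, by simp [hσ], by simp [hσ, pointedCost_one]⟩
    obtain ⟨g, hg, hgz, hgo, hcost⟩ := exists_isThreeCycle_pointedCost_mul hσ hsign hzo hz
    obtain ⟨L, hL, hprod, hlen⟩ := ih (σ := σ * g) (by simp [hsign, hg.sign])
      (by simp [hgz, hz]) (by push_cast at hk; linarith)
    refine ⟨L ++ [g⁻¹], ?_, by simp [hprod], ?_⟩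
    · simp only [List.mem_append, List.mem_singleton]
      rintro g' (hg' | rfl)
      · exact hL g' hg'
      · refine ⟨hg.inv, by rw [inv_eq_iff_eq, hgz], ?_⟩
        rwa [Ne, inv_eq_iff_eq, eq_comm]
    · simp only [List.length_append, List.length_singleton]
      push_cast
      linarith

end PointedCost

end Equiv.Perm

open Equiv Equiv.Perm Finset

theorem fixedPointCountPos_add_card_support {n : ℕ} {π : Perm (Fin (n + 1))} (hπ : π 0 = 0) :
    fixedPointCountPos n π + #π.support = n := by
  have hfix : univ.filter (fun x : Fin (n + 1) => x ≠ 0 ∧ π x = x) = π.supportᶜ.erase 0 := by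
    ext x
    simp
  have hcompl := card_erase_add_one (show (0 : Fin (n + 1)) ∈ π.supportᶜ by simp [hπ])
  have hsupp := card_le_univ π.support
  rw [card_compl] at hcompl
  rw [Fintype.card_fin] at hcompl hsupp
  rw [fixedPointCountPos, hfix]
  omega

/-- for every even permutation π of {1,…,n} (extended to {0,…,n} by
fixing 0), d¹₃(π) = (n + c(π))/2 − c₁(π) − ε, where c and c₁ count cycles and fixed
points of π as a permutation of {1,…,n}, and ε = 0 if π(1) = 1 and ε = 1 otherwise. -/
theorem d13_eq (n : ℕ) (π : Equiv.Perm (Fin (n + 1))) (hπ : π 0 = 0)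
    (heven : Equiv.Perm.sign π = 1) :
    (d13 n π : ℚ) = ((n : ℚ) + cycleCountPos n π) / 2 - fixedPointCountPos n π -
      (if π 1 = 1 then 0 else 1) := by
  obtain rfl | hn := eq_or_ne n 0
  · obtain rfl : π = 1 := Equiv.ext fun _ => Subsingleton.elim (α := Fin 1) _ _
    have hd : d13 0 1 = 0 := Nat.eq_zero_of_le_zero (Nat.sInf_le ⟨[], rfl, by simp, rfl⟩)
    simp [hd, cycleCountPos, fixedPointCountPos, Fin.eq_zero]
  have h01 : (0 : Fin (n + 1)) ≠ 1 := by
    simp [Fin.ext_iff, Nat.mod_eq_of_lt, hn]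
  obtain ⟨L, hL, hprod, hlen⟩ := exists_list_isThreeCycle_prod_eq h01 heven hπ
  have hd : d13 n π = L.length := by
    refine le_antisymm (Nat.sInf_le ⟨L, rfl, hL, hprod⟩) (le_csInf ⟨_, L, rfl, hL, hprod⟩ ?_)
    rintro _ ⟨L', rfl, hL', rfl⟩
    have := pointedCost_prod_le fun g hg => ⟨(hL' g hg).1, (hL' g hg).2.2⟩
    exact_mod_cast (by linarith : (L.length : ℚ) ≤ L'.length)
  have hfix : (fixedPointCountPos n π : ℚ) + #π.support = n := by
    exact_mod_cast fixedPointCountPos_add_card_support hπ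
  rw [pointedCost] at hlen
  rw [hd, cycleCountPos]
  push_cast
  split_ifs at hlen ⊢ <;> linarith
end

section
/- Let χ be the reverse permutation of {1,2,…,n}, mapping i to n+1−i, extended to {0,1,…,n} by fixing 0. For every permutation π of {1,2,…,n} (extended to {0,1,…,n} by fixing 0), the image of the conjugate π^χ = χ∘π∘χ satisfies overline(π^χ) = ρ ∘ (χ ∘ (overline(π))⁻¹ ∘ χ) ∘ ρ⁻¹, where ρ is the (n+1)-cycle (0,1,2,…,n). -/
/-!
On `Fin (n + 1) = ℤ/(n+1)` the rotation `ρ` is `x ↦ x + 1` and the extended reversal `χ` is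
`x ↦ -x`, so `χ` is a reflection of the dihedral group generated by them: `χ² = 1` and
`χ ρ χ = ρ⁻¹`. The identity is then a formal consequence of these two relations.
-/

theorem conj_overline_of_reflection {G : Type*} [Group G] {ρ χ : G} (hχ : χ * χ = 1)
    (hρ : χ * ρ * χ = ρ⁻¹) (π : G) :
    ρ * (χ * π * χ * ρ⁻¹ * (χ * π * χ)⁻¹) = ρ * (χ * (ρ * (π * ρ⁻¹ * π⁻¹))⁻¹ * χ) * ρ⁻¹ := by
  have hχ_inv : χ⁻¹ = χ := inv_eq_of_mul_eq_one_right hχ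
  have hχχ (g : G) : χ * (χ * g) = g := by rw [← mul_assoc, hχ, one_mul]
  have hρχρχ : ρ * (χ * (ρ * χ)) = 1 := by rw [← mul_assoc χ, hρ, mul_inv_cancel]
  simp only [mul_inv_rev, inv_inv, hχ_inv, ← hρ, mul_assoc, hχχ, hρχρχ, mul_one]

theorem eq_equivNeg_of_reverse (n : ℕ) (χ : Equiv.Perm (Fin (n + 1))) (hχ0 : χ 0 = 0)
    (hχ : ∀ x : Fin (n + 1), x ≠ 0 → (χ x : ℕ) = n + 1 - (x : ℕ)) :
    χ = Equiv.neg (Fin (n + 1)) := by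
  ext x
  rcases eq_or_ne x 0 with rfl | hx
  · simp [hχ0]
  · rw [hχ x hx, Equiv.neg_apply, Fin.val_neg', Nat.mod_eq_of_lt]
    exact Nat.sub_lt n.succ_pos (Nat.pos_of_ne_zero (Fin.val_ne_of_ne hx))

theorem equivNeg_mul_self (n : ℕ) :
    Equiv.neg (Fin (n + 1)) * Equiv.neg (Fin (n + 1)) = 1 := by
  ext x
  simp

theorem equivNeg_mul_rho_mul_equivNeg (n : ℕ) :
    Equiv.neg (Fin (n + 1)) * rho n * Equiv.neg (Fin (n + 1)) = (rho n)⁻¹ := by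
  rw [eq_inv_iff_mul_eq_one]
  ext x
  simp [rho]

theorem overline_conj_reverse_general (n : ℕ) (π χ : Equiv.Perm (Fin (n + 1)))
    (hχ0 : χ 0 = 0)
    (hχ : ∀ x : Fin (n + 1), x ≠ 0 → (χ x : ℕ) = n + 1 - (x : ℕ)) :
    ob n (χ * π * χ) = rho n * (χ * (ob n π)⁻¹ * χ) * (rho n)⁻¹ := by
  obtain rfl := eq_equivNeg_of_reverse n χ hχ0 hχ
  exact conj_overline_of_reflection (equivNeg_mul_self n) (equivNeg_mul_rho_mul_equivNeg n) π

/-- let χ be the reverse permutation of {1,…,n}, mapping i to n+1−i and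
fixing 0. For every permutation π of {1,…,n} (extended to {0,…,n} by fixing 0),
overline(χ∘π∘χ) = ρ ∘ (χ ∘ (overline(π))⁻¹ ∘ χ) ∘ ρ⁻¹, where ρ = (0,1,2,…,n). -/
theorem overline_conj_reverse (n : ℕ) (π χ : Equiv.Perm (Fin (n + 1)))
    (hπ : π 0 = 0) (hχ0 : χ 0 = 0)
    (hχ : ∀ x : Fin (n + 1), x ≠ 0 → (χ x : ℕ) = n + 1 - (x : ℕ)) :
    ob n (χ * π * χ) = rho n * (χ * (ob n π)⁻¹ * χ) * (rho n)⁻¹ :=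
  overline_conj_reverse_general n π χ hχ0 hχ
end

section
/- Let π be a permutation of {1,2,…,n} (extended to {0,1,…,n} by fixing 0) and let C be a cycle of the permutation overline(π) of length ℓ ≥ 2. Say that a descent of π, i.e. an index i with 2 ≤ i ≤ n and π_i < π_{i−1}, is contained in C if the element π_i belongs to the cycle C. Then the number of descents of π contained in C is at least 1 and at most ℓ − 1. -/
open Fin.NatCast

open Finset

section CycleOrder

variable {α β : Type*} [LinearOrder β] {f : α → α} {C : Finset α}

theorem card_filter_lt_apply_le_card_sub_one (k : α → β) (hf : ∀ y ∈ C, f y ∈ C) :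
    #{y ∈ C | k y < k (f y)} ≤ #C - 1 := by
  rcases C.eq_empty_or_nonempty with rfl | hC
  · simp
  obtain ⟨m, hm, hmax⟩ := C.exists_max_image k hC
  have : #{y ∈ C | k y < k (f y)} < #C :=
    card_lt_card (filter_ssubset.2 ⟨m, hm, (hmax _ (hf m hm)).not_gt⟩)
  omega

theorem card_filter_lt_apply_pos {k : α → β} (hk : Function.Injective k) (hC : C.Nonempty)
    (hf : ∀ y ∈ C, f y ∈ C) (hfix : ∀ y ∈ C, f y ≠ y) :
    0 < #{y ∈ C | k y < k (f y)} := by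
  obtain ⟨m, hm, hmin⟩ := C.exists_min_image k hC
  exact card_pos.2 ⟨m, mem_filter.2 ⟨hm, (hmin _ (hf m hm)).lt_of_ne (hk.ne (hfix m hm).symm)⟩⟩

end CycleOrder

theorem Equiv.Perm.apply_ne_self_of_mem_cycle {α : Type*} {f : Equiv.Perm α} {x y : α}
    {C : Finset α} (hC : ∀ z, z ∈ C ↔ f.SameCycle x z) (hcard : 2 ≤ #C) (hy : y ∈ C) :
    f y ≠ y := by
  intro hfix
  have hx : f x = x := ((hC y).1 hy).apply_eq_self_iff.2 hfix
  have : #C ≤ 1 := card_le_one.2 fun a ha b hb =>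
    (((hC a).1 ha).eq_of_left hx).symm.trans (((hC b).1 hb).eq_of_left hx)
  omega

theorem Fin.sub_one_lt_iff_ne_zero_and_le {n : ℕ} {a b : Fin (n + 1)} :
    a - 1 < b ↔ a ≠ 0 ∧ a ≤ b := by
  rcases eq_or_ne a 0 with rfl | ha
  · simp [Fin.lt_def, Fin.coe_neg_one, Nat.lt_succ_iff.1 b.isLt]
  · have : a.val ≠ 0 := Fin.val_ne_zero_iff.2 ha
    rw [Fin.lt_def, Fin.le_def, Fin.val_sub_one_of_ne_zero ha]
    omega

theorem ob_apply_sub_one (n : ℕ) (π : Equiv.Perm (Fin (n + 1))) (y : Fin (n + 1)) :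
    ob n π y - 1 = π (π.symm y - 1) := by
  simp [ob, rho, Equiv.Perm.mul_apply, finRotate_apply]

theorem Equiv.Perm.sub_one_lt_apply_sub_one_iff {n : ℕ} {π : Equiv.Perm (Fin (n + 1))}
    (hπ : π 0 = 0) (j : Fin (n + 1)) :
    π j - 1 < π (j - 1) ↔ 2 ≤ j.val ∧ π j < π (j - 1) := by
  rw [Fin.sub_one_lt_iff_ne_zero_and_le, ← hπ, π.injective.ne_iff]
  constructor
  · rintro ⟨hj, hle⟩
    have hlt : π j < π (j - 1) :=
      hle.lt_of_ne (π.injective.ne (Fin.sub_one_lt_iff.2 (Fin.pos_iff_ne_zero.2 hj)).ne')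
    refine ⟨?_, hlt⟩
    by_contra! hj2
    have hj1 : j - 1 = 0 := Fin.ext (by rw [Fin.val_sub_one_of_ne_zero hj, Fin.val_zero]; omega)
    rw [hj1, hπ] at hlt
    exact (Fin.zero_le _).not_gt hlt
  · rintro ⟨hj2, hlt⟩
    exact ⟨fun h => by simp [h] at hj2, hlt.le⟩

theorem Fin.natCast_sub_one {n i : ℕ} (hi : 1 ≤ i) :
    ((i - 1 : ℕ) : Fin (n + 1)) = (i : Fin (n + 1)) - 1 := by
  obtain ⟨k, rfl⟩ := Nat.exists_eq_add_of_le' hi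
  simp

theorem card_filter_Icc_two_eq (n : ℕ) (p : Fin (n + 1) → Fin (n + 1) → Prop)
    [∀ a b, Decidable (p a b)] :
    ((Icc 2 n).filter fun i : ℕ => p (i : Fin (n + 1)) ((i - 1 : ℕ) : Fin (n + 1))).card =
      #{j : Fin (n + 1) | 2 ≤ j.val ∧ p j (j - 1)} := by
  refine card_nbij' (fun i : ℕ => (i : Fin (n + 1))) Fin.val ?_ ?_ ?_ ?_
  · intro i hi
    simp only [mem_coe, mem_filter, mem_Icc, mem_univ, true_and] at hi ⊢
    rw [Fin.val_cast_of_lt (by omega), ← Fin.natCast_sub_one (by omega)]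
    exact ⟨hi.1.1, hi.2⟩
  · intro j hj
    simp only [mem_coe, mem_filter, mem_Icc, mem_univ, true_and] at hj ⊢
    rw [Fin.natCast_sub_one (by omega), Fin.cast_val_eq_self]
    exact ⟨⟨hj.1, Nat.lt_succ_iff.1 j.isLt⟩, hj.2⟩
  · intro i hi
    simp only [mem_coe, mem_filter, mem_Icc] at hi
    exact Fin.val_cast_of_lt (by omega)
  · intro j _
    exact Fin.cast_val_eq_self j

theorem card_descents_eq_card_filter_sub_one_lt {n : ℕ} {π : Equiv.Perm (Fin (n + 1))}
    (hπ : π 0 = 0) (C : Finset (Fin (n + 1))) :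
    ((Icc 2 n).filter fun i : ℕ =>
        π (i : Fin (n + 1)) < π ((i - 1 : ℕ) : Fin (n + 1)) ∧ π (i : Fin (n + 1)) ∈ C).card =
      #{y ∈ C | y - 1 < ob n π y - 1} := by
  rw [card_filter_Icc_two_eq n fun a b => π a < π b ∧ π a ∈ C]
  refine card_equiv π fun j => ?_
  simp only [mem_filter, mem_univ, true_and, ob_apply_sub_one, Equiv.symm_apply_apply,
    π.sub_one_lt_apply_sub_one_iff hπ]
  tauto

/-- let π be a permutation of {1,…,n} (extended to {0,…,n} by fixing 0) and
let C be a cycle of overline(π) of length ℓ ≥ 2 — formalised as the orbit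
C = {y | overline(π).SameCycle x y} of some element x, with |C| = ℓ. Then the number of
descents of π (indices i with 2 ≤ i ≤ n and π_i < π_{i−1}) whose element π_i belongs to C
is at least 1 and at most ℓ − 1. -/
theorem descents_in_cycle (n : ℕ) (π : Equiv.Perm (Fin (n + 1))) (hπ : π 0 = 0)
    (x : Fin (n + 1)) (ℓ : ℕ) (hℓ : 2 ≤ ℓ)
    (C : Finset (Fin (n + 1)))
    (hC : C = Finset.univ.filter fun y => (ob n π).SameCycle x y)
    (hcard : C.card = ℓ) :
    1 ≤ ((Finset.Icc 2 n).filter fun i : ℕ =>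
        π (i : Fin (n + 1)) < π ((i - 1 : ℕ) : Fin (n + 1)) ∧
          π (i : Fin (n + 1)) ∈ C).card ∧
      ((Finset.Icc 2 n).filter fun i : ℕ =>
        π (i : Fin (n + 1)) < π ((i - 1 : ℕ) : Fin (n + 1)) ∧
          π (i : Fin (n + 1)) ∈ C).card ≤ ℓ - 1 := by
  have hmem : ∀ y, y ∈ C ↔ (ob n π).SameCycle x y := by simp [hC]
  have hmaps : ∀ y ∈ C, ob n π y ∈ C := fun y hy => (hmem _).2 ((hmem y).1 hy).apply_right
  have hne : C.Nonempty := card_pos.1 (by omega)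
  rw [card_descents_eq_card_filter_sub_one_lt hπ, ← hcard]
  exact ⟨card_filter_lt_apply_pos sub_left_injective hne hmaps
      fun y => Equiv.Perm.apply_ne_self_of_mem_cycle hmem (hcard ▸ hℓ),
    card_filter_lt_apply_le_card_sub_one _ hmaps⟩
end
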